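/- Let α₁, α₂, β₁, β₂: ℕ → ℕ be non-decreasing functions such that α₁ ≈ α₂ and β₁ ≈ β₂, and suppose β₁ and β₂ have at least linear growth. Then the functions (k,m,n) ↦ α₁(n)/β₁(m) and (k,m,n) ↦ α₂(n)/β₂(m), viewed as elements of 𝓕 independent of k, are equivalent: α₁(n)/β₁(m) ∼ α₂(n)/β₂(m). -/
import Mathlib


open Function

namespace IsoSpecPaper

variable {ι : Type*} {G : Type*} [Group G]

/-- The (reduced) length of an element of a free group. -/
noncomputable def wnorm (w : FreeGroup ι) : ℕ :=
  @FreeGroup.norm ι (Classical.decEq ι) w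

/-- `triv φ k` : the set of words of length at most `k` in the generators
(and their inverses) representing the identity of `G` under the marking `φ`. -/
noncomputable def triv (φ : FreeGroup ι →* G) (k : ℕ) : Set (FreeGroup ι) :=
  {w | wnorm w ≤ k ∧ φ w = 1}

/-- `AreaLe R w l` : `w` is a product of `l` conjugates of elements of `R` or
their inverses in the free group. -/
def AreaLe (R : Set (FreeGroup ι)) (w : FreeGroup ι) (l : ℕ) : Prop :=
  ∃ L : List (FreeGroup ι × FreeGroup ι), L.length = l ∧
    (∀ p ∈ L, p.2 ∈ R ∨ p.2⁻¹ ∈ R) ∧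
    w = (L.map fun p => p.1⁻¹ * p.2 * p.1).prod

/-- The area of `w` with respect to the set of relators `R`. -/
noncomputable def area (R : Set (FreeGroup ι)) (w : FreeGroup ι) : ℕ :=
  sInf {l | AreaLe R w l}

/-- The isoperimetric spectrum of the marked group `(G, φ)`:
`isoSpec φ k m n = max { area_{S_m}(w) : w ∈ ⟪S_k⟫, ‖w‖ ≤ n }`. -/
noncomputable def isoSpec (φ : FreeGroup ι →* G) (k m n : ℕ) : ℕ :=
  sSup (area (triv φ m) '' {w | w ∈ Subgroup.normalClosure (triv φ k) ∧ wnorm w ≤ n})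

/-- The real-valued isoperimetric spectrum. -/
noncomputable def isoSpecR (φ : FreeGroup ι →* G) : ℕ → ℕ → ℕ → ℝ :=
  fun k m n => (isoSpec φ k m n : ℝ)

/-- The Dehn function of the presentation with relators `R`. -/
noncomputable def dehn (R : Set (FreeGroup ι)) (n : ℕ) : ℕ :=
  sSup (area R '' {w | w ∈ Subgroup.normalClosure R ∧ wnorm w ≤ n})

/-- The quasi-order `f ≼ g` on functions of triples `(k,m,n)` of positive integers
with `m ≥ k`. -/
def SpecLE (f g : ℕ → ℕ → ℕ → ℝ) : Prop :=
  ∃ C : ℕ, 0 < C ∧ ∀ k m n : ℕ, 0 < k → 0 < m → 0 < n → C * k ≤ m →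
    f k (C * m) n ≤ C * g (C * k) m (C * n) + C * (n : ℝ) / m + C

/-- Equivalence of isoperimetric functions: `f ∼ g`. -/
def SpecEquiv (f g : ℕ → ℕ → ℕ → ℝ) : Prop := SpecLE f g ∧ SpecLE g f

/-- The linear spectrum `(k,m,n) ↦ n/m`. -/
noncomputable def linSpec : ℕ → ℕ → ℕ → ℝ := fun _ m n => (n : ℝ) / m

/-- The word length of `g ∈ G` with respect to the marking `φ`. -/
noncomputable def wlen (φ : FreeGroup ι →* G) (g : G) : ℕ :=
  sInf {n | ∃ w : FreeGroup ι, wnorm w = n ∧ φ w = g}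

/-- The word metric on `G` with respect to the marking `φ`. -/
noncomputable def wdist (φ : FreeGroup ι →* G) (g h : G) : ℕ := wlen φ (g⁻¹ * h)

/-- Quasi-isometry of marked groups with respect to their word metrics. -/
noncomputable def QuasiIsometric {H : Type*} [Group H] {κ : Type*}
    (φ : FreeGroup ι →* G) (ψ : FreeGroup κ →* H) : Prop :=
  ∃ L : ℝ, 0 ≤ L ∧ ∃ (α : G → H) (β : H → G),
    (∀ x y : G, (wdist ψ (α x) (α y) : ℝ) ≤ L * wdist φ x y + L) ∧
    (∀ u v : H, (wdist φ (β u) (β v) : ℝ) ≤ L * wdist ψ u v + L) ∧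
    (∀ t : H, (wdist ψ (α (β t)) t : ℝ) ≤ L) ∧
    (∀ s : G, (wdist φ (β (α s)) s : ℝ) ≤ L)

/-- A (combinatorial) geodesic path of length `n` in the Cayley graph of `(G, φ)`:
consecutive vertices are at distance at most `1` and the endpoints are at
distance exactly `n`. -/
noncomputable def IsGeodesic (φ : FreeGroup ι →* G) {n : ℕ} (p : Fin (n + 1) → G) : Prop :=
  (∀ i : Fin n, wdist φ (p i.castSucc) (p i.succ) ≤ 1) ∧
  wdist φ (p 0) (p (Fin.last n)) = n

/-- Every vertex of the path `p` lies within distance `δ` of the set `A`. -/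
noncomputable def ThinAt (φ : FreeGroup ι →* G) (δ : ℝ) {n : ℕ}
    (p : Fin (n + 1) → G) (A : Set G) : Prop :=
  ∀ i, ∃ a ∈ A, (wdist φ (p i) a : ℝ) ≤ δ

/-- The Cayley graph of `(G, φ)` is `δ`-hyperbolic: every geodesic triangle is `δ`-thin. -/
noncomputable def HypConst (φ : FreeGroup ι →* G) (δ : ℝ) : Prop :=
  ∀ (n₁ n₂ n₃ : ℕ) (p : Fin (n₁ + 1) → G) (q : Fin (n₂ + 1) → G) (r : Fin (n₃ + 1) → G),
    IsGeodesic φ p → IsGeodesic φ q → IsGeodesic φ r →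
    p (Fin.last n₁) = q 0 → q (Fin.last n₂) = r 0 → r (Fin.last n₃) = p 0 →
    ThinAt φ δ p (Set.range q ∪ Set.range r) ∧
    ThinAt φ δ q (Set.range r ∪ Set.range p) ∧
    ThinAt φ δ r (Set.range p ∪ Set.range q)

/-- The marked group `(G, φ)` is hyperbolic. -/
noncomputable def IsHyperbolic (φ : FreeGroup ι →* G) : Prop :=
  ∃ δ : ℝ, 0 ≤ δ ∧ HypConst φ δ

/-- `G` (marked by `φ`) is a limit (direct limit) of hyperbolic groups. -/
noncomputable def LimitOfHyperbolic (φ : FreeGroup ι →* G) : Prop :=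
  Surjective φ ∧ ∃ R : ℕ → Set (FreeGroup ι),
    (∀ i j, i ≤ j → R i ⊆ R j) ∧
    φ.ker = Subgroup.normalClosure (⋃ i, R i) ∧
    ∀ i, IsHyperbolic (QuotientGroup.mk' (Subgroup.normalClosure (R i)))

/-- `G` (marked by `φ`) is well-approximated by hyperbolic groups. -/
noncomputable def WellApproximated (φ : FreeGroup ι →* G) : Prop :=
  Surjective φ ∧ ∃ R : ℕ → Set (FreeGroup ι),
    (∀ i j, i ≤ j → R i ⊆ R j) ∧
    φ.ker = Subgroup.normalClosure (⋃ i, R i) ∧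
    (∀ i, IsHyperbolic (QuotientGroup.mk' (Subgroup.normalClosure (R i)))) ∧
    ∃ C : ℕ, 0 < C ∧ ∀ i : ℕ, 0 < i →
      (∀ w : FreeGroup ι, wnorm w ≤ i → φ w = 1 →
        w ∈ Subgroup.normalClosure (R i)) ∧
      HypConst (QuotientGroup.mk' (Subgroup.normalClosure (R i))) ((C * i : ℕ) : ℝ)

/-- `f ≾ g` for non-decreasing functions `ℕ → ℕ`: `f(n) ≤ C·g(Cn) + Cn`. -/
def FunLE (f g : ℕ → ℕ) : Prop :=
  ∃ C : ℕ, 0 < C ∧ ∀ n : ℕ, 0 < n → f n ≤ C * g (C * n) + C * n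

/-- `f ≈ g`. -/
def FunEquiv (f g : ℕ → ℕ) : Prop := FunLE f g ∧ FunLE g f

/-- `f` has at least linear growth: `inf_n f(n)/n > 0`. -/
def AtLeastLinear (f : ℕ → ℕ) : Prop :=
  ∃ c : ℝ, 0 < c ∧ ∀ n : ℕ, 0 < n → c ≤ (f n : ℝ) / n

lemma specLE_div_aux (α₁ α₂ β₁ β₂ : ℕ → ℕ)
    (hα₂ : Monotone α₂) (hβ₁ : Monotone β₁)
    (h1 : FunLE α₁ α₂) (h2 : FunLE β₂ β₁)
    (hl₁ : AtLeastLinear β₁) (hl₂ : AtLeastLinear β₂) :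
    SpecLE (fun _ m n => (α₁ n : ℝ) / (β₁ m : ℝ))
      (fun _ m n => (α₂ n : ℝ) / (β₂ m : ℝ)) := by
  obtain ⟨A, hA, hA'⟩ := h1
  obtain ⟨B, hB, hB'⟩ := h2
  obtain ⟨c, hc, hc'⟩ := hl₁
  obtain ⟨c', hc'', hc₂⟩ := hl₂
  have hK0 : (0:ℝ) < B + 1 / c := by positivity
  obtain ⟨C, hCdef⟩ : ∃ C : ℕ, C = A + B + 1 + ⌈(A:ℝ) * (B + 1 / c) + A / c⌉₊ :=
    ⟨_, rfl⟩
  refine ⟨C, by omega, ?_⟩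
  have hC1 : 1 ≤ C := by omega
  have hAC : A ≤ C := by omega
  have hBC : B ≤ C := by omega
  have hCceil : (A:ℝ) * (B + 1 / c) + A / c ≤ C := by
    refine (Nat.le_ceil _).trans ?_
    have : ⌈(A:ℝ) * (B + 1 / c) + A / c⌉₊ ≤ C := by omega
    exact_mod_cast this
  have hCK : (A:ℝ) * (B + 1 / c) ≤ C := by
    have : (0:ℝ) ≤ (A:ℝ) / c := by positivity
    linarith
  have hCc : (A:ℝ) ≤ c * C := by
    have h5 : (A:ℝ) / c ≤ C := by
      have : (0:ℝ) ≤ (A:ℝ) * (B + 1 / c) := by positivity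
      linarith
    calc (A:ℝ) = c * ((A:ℝ) / c) := by field_simp
    _ ≤ c * C := by nlinarith
  clear hCdef
  intro k m n hk hm hn hkm
  simp only
  have hm' : (0:ℝ) < m := by exact_mod_cast hm
  have hn' : (0:ℝ) < n := by exact_mod_cast hn
  have hCm : 0 < C * m := Nat.mul_pos (by omega) hm
  have hCm' : (0:ℝ) < ((C * m : ℕ) : ℝ) := by exact_mod_cast hCm
  have hM : c * ((C:ℝ) * m) ≤ (β₁ (C * m) : ℝ) := by
    have h := hc' (C * m) hCm
    rw [le_div_iff₀ hCm'] at h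
    push_cast at h
    linarith
  have hCpos : (0:ℝ) < C := by exact_mod_cast hC1
  have hM0 : (0:ℝ) < (β₁ (C * m) : ℝ) :=
    lt_of_lt_of_le (mul_pos hc (mul_pos hCpos hm')) hM
  have hN0 : (0:ℝ) < (β₂ m : ℝ) := by
    have h := hc₂ m hm
    rw [le_div_iff₀ hm'] at h
    nlinarith
  have hNK : (β₂ m : ℝ) ≤ (B + 1 / c) * (β₁ (C * m) : ℝ) := by
    have h1 : β₂ m ≤ B * β₁ (C * m) + B * m := by
      refine (hB' m hm).trans (Nat.add_le_add_right ?_ _)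
      exact Nat.mul_le_mul_left B (hβ₁ (Nat.mul_le_mul_right m hBC))
    have h3 : (β₂ m : ℝ) ≤ B * (β₁ (C * m) : ℝ) + B * m := by exact_mod_cast h1
    have h4 : (B:ℝ) * m ≤ (1 / c) * (β₁ (C * m) : ℝ) := by
      have h5 : (B:ℝ) * m ≤ (C:ℝ) * m := by
        have : (B:ℝ) ≤ C := by exact_mod_cast hBC
        nlinarith
      rw [div_mul_eq_mul_div, le_div_iff₀ hc]
      nlinarith
    linarith
  have hα : (α₁ n : ℝ) ≤ A * (α₂ (C * n) : ℝ) + A * n := by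
    have h1 : α₁ n ≤ A * α₂ (C * n) + A * n := by
      refine (hA' n hn).trans (Nat.add_le_add_right ?_ _)
      exact Nat.mul_le_mul_left A (hα₂ (Nat.mul_le_mul_right n hAC))
    exact_mod_cast h1
  have hx0 : (0:ℝ) ≤ (α₂ (C * n) : ℝ) := Nat.cast_nonneg _
  have step1 : (α₁ n : ℝ) / (β₁ (C * m) : ℝ) ≤
      (A * (α₂ (C * n) : ℝ) + A * n) / (β₁ (C * m) : ℝ) :=
    div_le_div_of_nonneg_right hα hM0.le
  have step2 : (A:ℝ) * (α₂ (C * n) : ℝ) / (β₁ (C * m) : ℝ) ≤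
      C * (α₂ (C * n) : ℝ) / (β₂ m : ℝ) := by
    rw [div_le_div_iff₀ hM0 hN0]
    have e1 : (A:ℝ) * (α₂ (C * n) : ℝ) * (β₂ m : ℝ) ≤
        (A:ℝ) * (α₂ (C * n) : ℝ) * ((B + 1 / c) * (β₁ (C * m) : ℝ)) :=
      mul_le_mul_of_nonneg_left hNK (by positivity)
    have e2 : (A:ℝ) * (α₂ (C * n) : ℝ) * ((B + 1 / c) * (β₁ (C * m) : ℝ)) ≤
        (C:ℝ) * (α₂ (C * n) : ℝ) * (β₁ (C * m) : ℝ) := by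
      have h := mul_le_mul_of_nonneg_right hCK
        (mul_nonneg hx0 hM0.le)
      calc (A:ℝ) * (α₂ (C * n) : ℝ) * ((B + 1 / c) * (β₁ (C * m) : ℝ))
          = (A:ℝ) * (B + 1 / c) * ((α₂ (C * n) : ℝ) * (β₁ (C * m) : ℝ)) := by ring
        _ ≤ (C:ℝ) * ((α₂ (C * n) : ℝ) * (β₁ (C * m) : ℝ)) := h
        _ = (C:ℝ) * (α₂ (C * n) : ℝ) * (β₁ (C * m) : ℝ) := by ring
    linarith
  have step3 : (A:ℝ) * n / (β₁ (C * m) : ℝ) ≤ C * n / m := by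
    rw [div_le_div_iff₀ hM0 hm']
    have hC1' : (1:ℝ) ≤ C := by exact_mod_cast hC1
    have hnm : (0:ℝ) ≤ (n:ℝ) * m := by positivity
    have g1 : (A:ℝ) * ((n:ℝ) * m) ≤ (c * C) * ((n:ℝ) * m) :=
      mul_le_mul_of_nonneg_right hCc hnm
    have g2 : (c * (C:ℝ)) * ((n:ℝ) * m) ≤ (c * (C:ℝ)) * ((C:ℝ) * ((n:ℝ) * m)) :=
      mul_le_mul_of_nonneg_left (le_mul_of_one_le_left hnm hC1') (by positivity)
    have g3 : (C:ℝ) * n * (c * ((C:ℝ) * m)) ≤ (C:ℝ) * n * (β₁ (C * m) : ℝ) :=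
      mul_le_mul_of_nonneg_left hM (by positivity)
    calc (A:ℝ) * n * m = (A:ℝ) * ((n:ℝ) * m) := by ring
      _ ≤ (c * C) * ((n:ℝ) * m) := g1
      _ ≤ (c * (C:ℝ)) * ((C:ℝ) * ((n:ℝ) * m)) := g2
      _ = (C:ℝ) * n * (c * ((C:ℝ) * m)) := by ring
      _ ≤ (C:ℝ) * n * (β₁ (C * m) : ℝ) := g3
  have hC0 : (0:ℝ) ≤ C := Nat.cast_nonneg _
  calc (α₁ n : ℝ) / (β₁ (C * m) : ℝ)
      ≤ (A * (α₂ (C * n) : ℝ) + A * n) / (β₁ (C * m) : ℝ) := step1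
    _ = (A:ℝ) * (α₂ (C * n) : ℝ) / (β₁ (C * m) : ℝ)
        + (A:ℝ) * n / (β₁ (C * m) : ℝ) := by ring
    _ ≤ C * (α₂ (C * n) : ℝ) / (β₂ m : ℝ) + C * n / m := by linarith
    _ ≤ C * ((α₂ (C * n) : ℝ) / (β₂ m : ℝ)) + C * n / m + C := by
        rw [mul_div_assoc]; linarith

/-- If `α₁ ≈ α₂`, `β₁ ≈ β₂` and `β₁, β₂` have at least linear growth,
then `α₁(n)/β₁(m) ∼ α₂(n)/β₂(m)` as elements of `𝓕` independent of `k`. -/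
theorem specEquiv_div_of_funEquiv (α₁ α₂ β₁ β₂ : ℕ → ℕ)
    (hα₁ : Monotone α₁) (hα₂ : Monotone α₂) (hβ₁ : Monotone β₁) (hβ₂ : Monotone β₂)
    (hα : FunEquiv α₁ α₂) (hβ : FunEquiv β₁ β₂)
    (hl₁ : AtLeastLinear β₁) (hl₂ : AtLeastLinear β₂) :
    SpecEquiv (fun _ m n => (α₁ n : ℝ) / (β₁ m : ℝ))
      (fun _ m n => (α₂ n : ℝ) / (β₂ m : ℝ)) := by
  exact ⟨specLE_div_aux α₁ α₂ β₁ β₂ hα₂ hβ₁ hα.1 hβ.2 hl₁ hl₂,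
    specLE_div_aux α₂ α₁ β₂ β₁ hα₁ hβ₂ hα.2 hβ.1 hl₂ hl₁⟩

end IsoSpecPaper
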